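/- The underlying simplicial complex of Δ' is not polytopal: there is no injective map f from the eighteen-element vertex set V = {e₁,e₂,e₃,e₄,d₁,d₂,d₃,d₄,c₁,…,c₁₀} into ℝ⁴ such that, setting P = convexHull(f(V)), the following two conditions hold: (i) for every nonempty set S contained in one of the fifty-five generator quadruples of Δ', the set convexHull(f(S)) is an extreme subset (face) of P; and (ii) every nonempty proper extreme subset of P equals convexHull(f(S)) for some nonempty set S contained in one of the fifty-five generator quadruples of Δ'. In other words, no 4-dimensional convex polytope has boundary complex combinatorially equivalent to the underlying simplicial complex of Δ'. -/

import Mathlib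

/-!
If every simplex of Δ' spans a face of `P`, each tetrahedron `{a, b, c, d}` of Δ' is a facet:
its vertices are affinely independent (a Radon partition of them would put a vertex of one part
into the face spanned by the other), and `P` meets the hyperplane through them only in that facet.
So all other vertices lie strictly on one side of the hyperplane: for `y, z ∉ {a, b, c, d}` the
brackets `[a b c d y] = det (b - a, c - a, d - a, y - a)` and `[a b c d z]` have the same sign.
For the seven vertices `e₁, e₂, e₃, e₄, d₁, d₂, d₃` and nine tetrahedra of Δ' these signs are
incompatible with the Grassmann–Plücker relation `[uvab][uvcd] - [uvac][uvbd] + [uvad][uvbc] = 0`.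
-/

open Matrix

noncomputable section

def E1 : Fin 18 := 0
def E2 : Fin 18 := 1
def E3 : Fin 18 := 2
def E4 : Fin 18 := 3
def D1 : Fin 18 := 4
def D2 : Fin 18 := 5
def D3 : Fin 18 := 6
def D4 : Fin 18 := 7
def C1 : Fin 18 := 8
def C2 : Fin 18 := 9
def C3 : Fin 18 := 10
def C4 : Fin 18 := 11
def C5 : Fin 18 := 12
def C6 : Fin 18 := 13
def C7 : Fin 18 := 14
def C8 : Fin 18 := 15
def C9 : Fin 18 := 16
def C10 : Fin 18 := 17

def Qgen : Fin 55 → Finset (Fin 18) :=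
  ![{E1, E2, E3, E4},
    {D1, E2, E3, E4},
    {E1, D2, E3, E4},
    {E1, E2, D3, E4},
    {E1, E2, E3, D4},
    {D1, D2, E3, E4},
    {E1, D2, D3, E4},
    {D1, E2, D3, E4},
    {E1, D2, E3, D3},
    {E1, E2, D3, D1},
    {D1, E2, E3, D2},
    {E1, E2, D1, D4},
    {D2, E2, E3, D4},
    {D1, E2, D2, D4},
    {C1, D3, E3, D4},
    {E1, C1, E3, D4},
    {E1, D3, E3, C1},
    {C1, D1, D3, D4},
    {E1, D1, C1, D4},
    {E1, D1, D3, C1},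
    {C2, D2, E3, D4},
    {D3, C2, E3, D4},
    {C3, D2, C2, D4},
    {D3, C3, C2, D4},
    {D3, D2, C3, D4},
    {C3, D2, E3, C2},
    {D3, C3, E3, C2},
    {D3, D2, E3, C3},
    {C5, D2, D3, E4},
    {C4, C5, D3, E4},
    {C6, D2, C5, E4},
    {C4, C6, C5, E4},
    {C4, D2, C6, E4},
    {C6, D2, D3, C5},
    {C4, C6, D3, C5},
    {C4, D2, D3, C6},
    {C8, C4, D3, E4},
    {C7, C8, D3, E4},
    {C7, C4, C8, E4},
    {D1, C7, D3, E4},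
    {D1, C4, C7, E4},
    {D1, C8, D3, C7},
    {D1, C4, C8, C7},
    {D1, C4, D3, C8},
    {C9, D2, C4, E4},
    {C10, C9, C4, E4},
    {D1, C10, C4, E4},
    {D1, C9, C10, E4},
    {D1, D2, C9, E4},
    {C10, D2, C4, C9},
    {D1, D2, C10, C9},
    {D1, D2, C4, C10},
    {C4, D2, D3, D4},
    {D1, C4, D3, D4},
    {D1, D2, C4, D4}]

/-- `F` is an extreme subset (face) of the convex set `P`: `F` is convex,
`F ⊆ P`, and whenever a point of `F` lies in the open segment between two
points of `P`, both endpoints belong to `F`. -/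
def IsFace (P F : Set (Fin 4 → ℝ)) : Prop :=
  Convex ℝ F ∧ F ⊆ P ∧
    ∀ x ∈ P, ∀ y ∈ P, ∀ z ∈ F, z ∈ openSegment ℝ x y → x ∈ F ∧ y ∈ F

open Set Function

theorem IsFace.isExtreme {P F : Set (Fin 4 → ℝ)} (h : IsFace P F) : IsExtreme ℝ P F :=
  ⟨h.2.1, fun x hx y hy z hz hzxy ↦ (h.2.2 x hx y hy z hz hzxy).1⟩

section Convex

variable {ι E : Type*} [AddCommGroup E] [Module ℝ E] {A B : Set E}

theorem mem_of_mem_extremePoints_of_mem_convexHull (hA : Convex ℝ A) {s : Set E} {x : E}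
    (hsA : s ⊆ A) (hx : x ∈ A.extremePoints ℝ) (hxs : x ∈ convexHull ℝ s) : x ∈ s :=
  extremePoints_convexHull_subset <|
    inter_extremePoints_subset_extremePoints_of_subset (convexHull_min hsA hA) ⟨hxs, hx⟩

theorem IsExtreme.exists_mem_of_mem_convexHull (hA : Convex ℝ A) (hAB : IsExtreme ℝ A B)
    {s : Set E} (hsA : s ⊆ A) {x : E} (hxs : x ∈ convexHull ℝ s) (hxB : x ∈ B) :
    ∃ y ∈ s, y ∈ B := by
  by_contra! h
  exact (convexHull_min (show s ⊆ A \ B from fun y hy ↦ ⟨hsA hy, h y hy⟩)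
    (hAB.convex_sdiff hA) hxs).2 hxB

theorem affineIndependent_of_isExtreme_convexHull_image {p : ι → E} (hp : Injective p)
    (hA : Convex ℝ A)
    (hfaces : ∀ I : Set ι, I.Nonempty → IsExtreme ℝ A (convexHull ℝ (p '' I))) :
    AffineIndependent ℝ p := by
  have hext (i : ι) : p i ∈ A.extremePoints ℝ := by
    simpa [isExtreme_singleton] using hfaces {i} (singleton_nonempty i)
  have hpA (I : Set ι) : p '' I ⊆ A :=
    (image_subset_range p I).trans (range_subset_iff.2 fun i ↦ (hext i).1)
  by_contra hdep
  obtain ⟨I, x, hxI, hxIc⟩ := Convex.radon_partition hdep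
  have hI : I.Nonempty := by
    by_contra! h
    simp [h] at hxI
  obtain ⟨_, ⟨k, hkI, rfl⟩, hk⟩ :=
    (hfaces I hI).exists_mem_of_mem_convexHull hA (hpA Iᶜ) hxIc hxI
  obtain ⟨j, hjI, hjk⟩ := mem_of_mem_extremePoints_of_mem_convexHull hA (hpA I) (hext k) hk
  exact hkI (hp hjk ▸ hjI)

theorem IsExtreme.mem_convexHull_of_mem_affineSpan [Fintype ι] {q : ι → E}
    (hAq : IsExtreme ℝ A (convexHull ℝ (range q))) {w : E} (hwA : w ∈ A)
    (hw : w ∈ affineSpan ℝ (range q)) : w ∈ convexHull ℝ (range q) := by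
  have : Nonempty ι := range_nonempty_iff_nonempty.1 ((affineSpan_nonempty ℝ).1 ⟨w, hw⟩)
  obtain ⟨l, hl, rfl⟩ := eq_affineCombination_of_mem_affineSpan_of_fintype hw
  rw [Finset.affineCombination_eq_linear_combination _ _ _ hl] at hwA ⊢
  have hmem {μ : ι → ℝ} (hμ : ∀ i, 0 ≤ μ i) (hμ1 : ∑ i, μ i = 1) :
      ∑ i, μ i • q i ∈ convexHull ℝ (range q) :=
    (convex_convexHull ℝ _).sum_mem (fun i _ ↦ hμ i) hμ1
      (fun i _ ↦ subset_convexHull ℝ _ (mem_range_self i))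
  set n : ℝ := (Fintype.card ι : ℝ)
  set M : ℝ := 2 + ∑ i, |l i|
  have hn : 1 ≤ n := Nat.one_le_cast.2 Fintype.card_pos
  have hlM (i : ι) : l i < M := by
    have := Finset.single_le_sum (fun j _ ↦ abs_nonneg (l j)) (Finset.mem_univ i)
    linarith [le_abs_self (l i)]
  have hnM : 1 < n * M := by
    nlinarith [Finset.sum_nonneg fun j (_ : j ∈ Finset.univ) ↦ abs_nonneg (l j)]
  have hne : n * M - 1 ≠ 0 := by linarith
  have hM : M ≠ 0 := by positivity
  have hn0 : n ≠ 0 := by positivity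
  -- the centroid lies in the open segment from `w` to this point of the hull
  have hz : ∑ i, ((M - l i) / (n * M - 1)) • q i ∈ convexHull ℝ (range q) :=
    hmem (fun i ↦ div_nonneg (by linarith [hlM i]) (by linarith)) (by
      rw [← Finset.sum_div, Finset.sum_sub_distrib, hl, Finset.sum_const, Finset.card_univ,
        nsmul_eq_mul]
      exact div_self hne)
  have hc : ∑ i, n⁻¹ • q i ∈ convexHull ℝ (range q) := hmem (fun _ ↦ by positivity) (by simp [n])
  refine hAq.left_mem_of_mem_openSegment hwA (hAq.subset hz) hc
    ⟨(n * M)⁻¹, 1 - (n * M)⁻¹, by positivity, sub_pos.2 (inv_lt_one_of_one_lt₀ hnM), by ring, ?_⟩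
  simp only [Finset.smul_sum, smul_smul, ← Finset.sum_add_distrib, ← add_smul]
  refine Finset.sum_congr rfl fun i _ ↦ ?_
  congr 1
  field_simp
  ring

theorem IsExtreme.zero_lt_mul_of_notMem (hA : Convex ℝ A) (hAB : IsExtreme ℝ A B)
    (φ : E →ᵃ[ℝ] ℝ) (hφ : ∀ w ∈ A, φ w = 0 → w ∈ B) {x y : E} (hx : x ∈ A \ B)
    (hy : y ∈ A \ B) : 0 < φ x * φ y := by
  have cross {u v : E} (hu : u ∈ A \ B) (hv : v ∈ A \ B) (hφu : φ u < 0) (hφv : 0 < φ v) :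
      False := by
    have hd : 0 < φ v - φ u := by linarith
    have ha : 0 < φ v / (φ v - φ u) := div_pos hφv hd
    have hb : 0 < -φ u / (φ v - φ u) := div_pos (neg_pos.2 hφu) hd
    have hab : φ v / (φ v - φ u) + -φ u / (φ v - φ u) = 1 := by field_simp; ring
    refine hu.2 (hAB.left_mem_of_mem_openSegment hu.1 hv.1 (hφ _ ?_ ?_) ⟨_, _, ha, hb, hab, rfl⟩)
    · exact hA hu.1 hv.1 ha.le hb.le hab
    · rw [Convex.combo_affine_apply hab, smul_eq_mul, smul_eq_mul]
      field_simp
      ring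
  have hx0 : φ x ≠ 0 := fun h ↦ hx.2 (hφ x hx.1 h)
  have hy0 : φ y ≠ 0 := fun h ↦ hy.2 (hφ y hy.1 h)
  by_contra! hle
  rcases mul_neg_iff.1 (hle.lt_of_ne (mul_ne_zero hx0 hy0)) with ⟨hφx, hφy⟩ | ⟨hφx, hφy⟩
  · exact cross hy hx hφy hφx
  · exact cross hx hy hφx hφy

end Convex

theorem det_fin_four {R : Type*} [CommRing R] (A : Matrix (Fin 4) (Fin 4) R) :
    A.det =
      A 0 0 * A 1 1 * A 2 2 * A 3 3 - A 0 0 * A 1 1 * A 2 3 * A 3 2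
      - A 0 0 * A 1 2 * A 2 1 * A 3 3 + A 0 0 * A 1 2 * A 2 3 * A 3 1
      + A 0 0 * A 1 3 * A 2 1 * A 3 2 - A 0 0 * A 1 3 * A 2 2 * A 3 1
      - A 0 1 * A 1 0 * A 2 2 * A 3 3 + A 0 1 * A 1 0 * A 2 3 * A 3 2
      + A 0 1 * A 1 2 * A 2 0 * A 3 3 - A 0 1 * A 1 2 * A 2 3 * A 3 0
      - A 0 1 * A 1 3 * A 2 0 * A 3 2 + A 0 1 * A 1 3 * A 2 2 * A 3 0
      + A 0 2 * A 1 0 * A 2 1 * A 3 3 - A 0 2 * A 1 0 * A 2 3 * A 3 1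
      - A 0 2 * A 1 1 * A 2 0 * A 3 3 + A 0 2 * A 1 1 * A 2 3 * A 3 0
      + A 0 2 * A 1 3 * A 2 0 * A 3 1 - A 0 2 * A 1 3 * A 2 1 * A 3 0
      - A 0 3 * A 1 0 * A 2 1 * A 3 2 + A 0 3 * A 1 0 * A 2 2 * A 3 1
      + A 0 3 * A 1 1 * A 2 0 * A 3 2 - A 0 3 * A 1 1 * A 2 2 * A 3 0
      - A 0 3 * A 1 2 * A 2 0 * A 3 1 + A 0 3 * A 1 2 * A 2 1 * A 3 0 := by
  simp only [det_succ_row_zero, Nat.succ_eq_add_one, Nat.reduceAdd, Fin.isValue, submatrix_apply,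
    Fin.succ_zero_eq_one, Fin.succAbove, submatrix_submatrix, Function.comp_apply,
    Fin.succ_one_eq_two, det_unique, Fin.default_eq_zero, Fin.reduceSucc, Fin.castSucc_zero,
    Fin.sum_univ_succ, Fin.coe_ofNat_eq_mod, Nat.zero_mod, pow_zero, one_mul, lt_self_iff_false,
    ↓reduceIte, Fin.castSucc_one, Finset.univ_unique, Fin.val_succ, Fin.val_eq_zero, zero_add,
    pow_one, Fin.castSucc_succ, neg_mul, Fin.succ_pos, Finset.sum_neg_distrib,
    Finset.sum_singleton, not_lt_zero, Fin.reduceCastSucc, even_two, Even.neg_pow, one_pow,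
    Fin.reduceLT, Fin.lt_one_iff, Fin.reduceEq]
  ring

theorem mem_affineSpan_of_det_eq_zero {n : ℕ} {q : Fin (n + 1) → Fin (n + 1) → ℝ}
    (hq : AffineIndependent ℝ q) {w : Fin (n + 1) → ℝ}
    (hw : (of (Fin.snoc (fun i : Fin n ↦ q i.succ - q 0) (w - q 0))).det = 0) :
    w ∈ affineSpan ℝ (range q) := by
  have hli : LinearIndependent ℝ fun i : Fin n ↦ q i.succ - q 0 := by
    rw [affineIndependent_iff_linearIndependent_vsub ℝ q 0] at hq
    exact hq.comp (fun i : Fin n ↦ (⟨i.succ, Fin.succ_ne_zero i⟩ : {x : Fin (n + 1) // x ≠ 0}))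
      fun i j h ↦ Fin.succ_injective _ (congrArg Subtype.val h)
  have hdep : ¬ LinearIndependent ℝ (Fin.snoc (fun i : Fin n ↦ q i.succ - q 0) (w - q 0)) := by
    intro h
    refine not_isUnit_zero (M₀ := ℝ) (hw ▸ (isUnit_iff_isUnit_det _).1 ?_)
    exact linearIndependent_rows_iff_isUnit.1 h
  rw [linearIndependent_finSnoc, not_and_not_right] at hdep
  rw [← AffineSubspace.vsub_right_mem_direction_iff_mem (mem_affineSpan ℝ (mem_range_self 0)),
    direction_affineSpan, vectorSpan_range_eq_span_range_vsub_right ℝ q 0]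
  refine Submodule.span_mono ?_ (hdep hli)
  rintro _ ⟨i, rfl⟩
  exact ⟨i.succ, rfl⟩

def bracket (q : Fin 4 → Fin 4 → ℝ) : (Fin 4 → ℝ) →ᵃ[ℝ] ℝ where
  toFun w := (of ![q 1 - q 0, q 2 - q 0, q 3 - q 0, w - q 0]).det
  linear :=
    { toFun u := (of ![q 1 - q 0, q 2 - q 0, q 3 - q 0, u]).det
      map_add' u v := by
        simp only [det_fin_four, of_apply, cons_val', cons_val_zero, cons_val_one, cons_val,
          cons_val_fin_one, Pi.sub_apply, Pi.add_apply]
        ring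
      map_smul' c u := by
        simp only [det_fin_four, of_apply, cons_val', cons_val_zero, cons_val_one, cons_val,
          cons_val_fin_one, Pi.sub_apply, Pi.smul_apply, smul_eq_mul, Real.ringHom_apply]
        ring }
  map_vadd' w u := by
    simp only [det_fin_four]
    simp only [of_apply, cons_val', cons_val_zero, cons_val_one, cons_val, cons_val_fin_one,
      Pi.sub_apply, Pi.add_apply, vadd_eq_add, LinearMap.coe_mk, AddHom.coe_mk]
    ring

theorem bracket_apply (q : Fin 4 → Fin 4 → ℝ) (w : Fin 4 → ℝ) :
    bracket q w = (of ![q 1 - q 0, q 2 - q 0, q 3 - q 0, w - q 0]).det :=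
  rfl

theorem mem_affineSpan_of_bracket_eq_zero {q : Fin 4 → Fin 4 → ℝ} (hq : AffineIndependent ℝ q)
    {w : Fin 4 → ℝ} (hw : bracket q w = 0) : w ∈ affineSpan ℝ (range q) := by
  refine mem_affineSpan_of_det_eq_zero hq ?_
  rw [← hw, bracket_apply]
  congr 2
  funext i
  fin_cases i <;> rfl

theorem det_grassmannPluecker (u v a b c d : Fin 4 → ℝ) :
    (of ![u, v, a, b]).det * (of ![u, v, c, d]).det
      - (of ![u, v, a, c]).det * (of ![u, v, b, d]).det
      + (of ![u, v, a, d]).det * (of ![u, v, b, c]).det = 0 := by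
  simp only [det_fin_four, of_apply, cons_val', cons_val_zero, cons_val_one, cons_val,
    cons_val_fin_one]
  ring

theorem bracket_grassmannPluecker (p₀ p₁ p₂ p₃ p₄ p₅ p₆ : Fin 4 → ℝ) :
    bracket ![p₀, p₁, p₂, p₃] p₄ * bracket ![p₀, p₁, p₂, p₅] p₆
      - bracket ![p₀, p₁, p₂, p₃] p₅ * bracket ![p₀, p₁, p₂, p₄] p₆
      + bracket ![p₀, p₁, p₂, p₃] p₆ * bracket ![p₀, p₁, p₂, p₄] p₅ = 0 :=
  det_grassmannPluecker (p₁ - p₀) (p₂ - p₀) (p₃ - p₀) (p₄ - p₀) (p₅ - p₀) (p₆ - p₀)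

theorem zero_lt_mul_of_zero_lt_mul {a b c : ℝ} (hab : 0 < a * b) (hbc : 0 < b * c) :
    0 < a * c := by
  nlinarith [mul_pos hab hbc, sq_nonneg b]

theorem false_of_bracket_signs (p₀ p₁ p₂ p₃ p₄ p₅ p₆ : Fin 4 → ℝ)
    (h0123 : 0 < bracket ![p₀, p₁, p₂, p₃] p₄ * bracket ![p₀, p₁, p₂, p₃] p₅)
    (h0123' : 0 < bracket ![p₀, p₁, p₂, p₃] p₄ * bracket ![p₀, p₁, p₂, p₃] p₆)
    (h0256 : 0 < bracket ![p₀, p₂, p₅, p₆] p₁ * bracket ![p₀, p₂, p₅, p₆] p₃)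
    (h0356 : 0 < bracket ![p₀, p₃, p₅, p₆] p₂ * bracket ![p₀, p₃, p₅, p₆] p₁)
    (h0136 : 0 < bracket ![p₀, p₁, p₃, p₆] p₅ * bracket ![p₀, p₁, p₃, p₆] p₄)
    (h0146 : 0 < bracket ![p₀, p₁, p₄, p₆] p₃ * bracket ![p₀, p₁, p₄, p₆] p₂)
    (h0235 : 0 < bracket ![p₀, p₂, p₃, p₅] p₆ * bracket ![p₀, p₂, p₃, p₅] p₄)
    (h2345 : 0 < bracket ![p₂, p₃, p₄, p₅] p₀ * bracket ![p₂, p₃, p₄, p₅] p₁)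
    (h1245 : 0 < bracket ![p₁, p₂, p₄, p₅] p₃ * bracket ![p₁, p₂, p₄, p₅] p₀) : False := by
  -- the bracket is alternating in its five points: list them in increasing order everywhere
  have hperm :
      bracket ![p₀, p₂, p₅, p₆] p₁ = -bracket ![p₀, p₁, p₂, p₅] p₆ ∧
      bracket ![p₀, p₂, p₅, p₆] p₃ = bracket ![p₀, p₂, p₃, p₅] p₆ ∧
      bracket ![p₀, p₃, p₅, p₆] p₂ = -bracket ![p₀, p₂, p₃, p₅] p₆ ∧
      bracket ![p₀, p₃, p₅, p₆] p₁ = -bracket ![p₀, p₁, p₃, p₅] p₆ ∧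
      bracket ![p₀, p₁, p₃, p₆] p₅ = -bracket ![p₀, p₁, p₃, p₅] p₆ ∧
      bracket ![p₀, p₁, p₃, p₆] p₄ = -bracket ![p₀, p₁, p₃, p₄] p₆ ∧
      bracket ![p₀, p₁, p₄, p₆] p₃ = bracket ![p₀, p₁, p₃, p₄] p₆ ∧
      bracket ![p₀, p₁, p₄, p₆] p₂ = bracket ![p₀, p₁, p₂, p₄] p₆ ∧
      bracket ![p₀, p₂, p₃, p₅] p₄ = -bracket ![p₀, p₂, p₃, p₄] p₅ ∧
      bracket ![p₂, p₃, p₄, p₅] p₀ = bracket ![p₀, p₂, p₃, p₄] p₅ ∧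
      bracket ![p₂, p₃, p₄, p₅] p₁ = bracket ![p₁, p₂, p₃, p₄] p₅ ∧
      bracket ![p₁, p₂, p₄, p₅] p₃ = bracket ![p₁, p₂, p₃, p₄] p₅ ∧
      bracket ![p₁, p₂, p₄, p₅] p₀ = bracket ![p₀, p₁, p₂, p₄] p₅ := by
    refine ⟨?_, ?_, ?_, ?_, ?_, ?_, ?_, ?_, ?_, ?_, ?_, ?_, ?_⟩ <;>
      simp only [bracket_apply, det_fin_four, of_apply, cons_val', cons_val_zero, cons_val_one,
        cons_val, cons_val_fin_one, Pi.sub_apply] <;>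
      ring
  obtain ⟨e₁, e₂, e₃, e₄, e₅, e₆, e₇, e₈, e₉, e₁₀, e₁₁, e₁₂, e₁₃⟩ := hperm
  rw [e₁, e₂] at h0256
  rw [e₃, e₄, neg_mul_neg] at h0356
  rw [e₅, e₆, neg_mul_neg] at h0136
  rw [e₇, e₈] at h0146
  rw [e₉] at h0235
  rw [e₁₀, e₁₁] at h2345
  rw [e₁₂, e₁₃] at h1245
  have hneg : bracket ![p₀, p₁, p₂, p₅] p₆ * bracket ![p₀, p₁, p₂, p₄] p₆ < 0 := by
    have := zero_lt_mul_of_zero_lt_mul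
      (zero_lt_mul_of_zero_lt_mul (zero_lt_mul_of_zero_lt_mul h0256 h0356) h0136) h0146
    linarith [neg_mul (bracket ![p₀, p₁, p₂, p₅] p₆) (bracket ![p₀, p₁, p₂, p₄] p₆)]
  have hpos : 0 < bracket ![p₀, p₁, p₂, p₅] p₆ * bracket ![p₀, p₁, p₂, p₄] p₅ := by
    have := zero_lt_mul_of_zero_lt_mul (zero_lt_mul_of_zero_lt_mul
      (zero_lt_mul_of_zero_lt_mul h0256 h0235) (by rwa [← neg_mul_neg] at h2345))
      (by rwa [← neg_mul_neg] at h1245)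
    rwa [neg_mul_neg] at this
  -- times `[p₀p₁p₂p₃p₄][p₀p₁p₂p₅p₆]`, the Grassmann–Plücker relation is a sum of a square and
  -- two positive terms
  nlinarith [mul_pos h0123' hpos, mul_pos h0123 (neg_pos.2 hneg),
    sq_nonneg (bracket ![p₀, p₁, p₂, p₃] p₄ * bracket ![p₀, p₁, p₂, p₅] p₆),
    congrArg (· * (bracket ![p₀, p₁, p₂, p₃] p₄ * bracket ![p₀, p₁, p₂, p₅] p₆))
      (bracket_grassmannPluecker p₀ p₁ p₂ p₃ p₄ p₅ p₆)]

theorem zero_lt_bracket_mul_bracket {ι : Type*} {f : ι → Fin 4 → ℝ} (hf : Injective f)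
    (hvert : ∀ i, f i ∈ (convexHull ℝ (range f)).extremePoints ℝ) {a b c d : ι}
    (habcd : Injective ![a, b, c, d])
    (hfaces : ∀ S ⊆ ({a, b, c, d} : Set ι), S.Nonempty →
      IsExtreme ℝ (convexHull ℝ (range f)) (convexHull ℝ (f '' S)))
    {y z : ι} (hy : y ∉ ({a, b, c, d} : Set ι)) (hz : z ∉ ({a, b, c, d} : Set ι)) :
    0 < bracket ![f a, f b, f c, f d] (f y) * bracket ![f a, f b, f c, f d] (f z) := by
  set P := convexHull ℝ (range f)
  have hP : Convex ℝ P := convex_convexHull ℝ _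
  have hq : ![f a, f b, f c, f d] = f ∘ ![a, b, c, d] := by
    funext i
    fin_cases i <;> rfl
  have hrange : range ![f a, f b, f c, f d] = f '' {a, b, c, d} := by
    rw [hq, range_comp]
    simp only [Matrix.range_cons, Matrix.range_empty, union_empty, singleton_union]
  have hF : IsExtreme ℝ P (convexHull ℝ (range ![f a, f b, f c, f d])) :=
    hrange ▸ hfaces _ subset_rfl (insert_nonempty _ _)
  have hindep : AffineIndependent ℝ ![f a, f b, f c, f d] := by
    refine affineIndependent_of_isExtreme_convexHull_image (hq ▸ hf.comp habcd) hP fun I hI ↦ ?_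
    rw [hq, image_comp]
    refine hfaces _ ?_ (hI.image _)
    rintro _ ⟨i, -, rfl⟩
    fin_cases i <;> simp
  have hout {u : ι} (hu : u ∉ ({a, b, c, d} : Set ι)) :
      f u ∈ P \ convexHull ℝ (range ![f a, f b, f c, f d]) := by
    refine ⟨(hvert u).1, fun h ↦ hu ?_⟩
    rw [hrange] at h
    obtain ⟨v, hv, hvu⟩ := mem_of_mem_extremePoints_of_mem_convexHull hP
      ((image_subset_range f _).trans (subset_convexHull ℝ _)) (hvert u) h
    exact hf hvu ▸ hv
  exact hF.zero_lt_mul_of_notMem hP _ (fun w hwP hw ↦ hF.mem_convexHull_of_mem_affineSpan hwP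
    (mem_affineSpan_of_bracket_eq_zero hindep hw)) (hout hy) (hout hz)

/-- The underlying simplicial complex of Δ' is not polytopal: no injective
placement of the 18 vertices in ℝ⁴ realizes it as the boundary complex of a
convex polytope. -/
theorem delta_prime_not_polytopal :
    ¬ ∃ f : Fin 18 → (Fin 4 → ℝ), Function.Injective f ∧
      (∀ S : Set (Fin 18), S.Nonempty → (∃ i : Fin 55, S ⊆ ↑(Qgen i)) →
        IsFace (convexHull ℝ (Set.range f)) (convexHull ℝ (f '' S))) ∧
      (∀ F : Set (Fin 4 → ℝ),
        IsFace (convexHull ℝ (Set.range f)) F → F.Nonempty →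
        F ≠ convexHull ℝ (Set.range f) →
        ∃ S : Set (Fin 18), S.Nonempty ∧ (∃ i : Fin 55, S ⊆ ↑(Qgen i)) ∧
          F = convexHull ℝ (f '' S)) := by
  rintro ⟨f, hf, hfaces, -⟩
  have hface (i : Fin 55) (S : Set (Fin 18)) (hS : S ⊆ Qgen i) (hne : S.Nonempty) :
      IsExtreme ℝ (convexHull ℝ (range f)) (convexHull ℝ (f '' S)) :=
    (hfaces S hne ⟨i, hS⟩).isExtreme
  have hvert (v : Fin 18) : f v ∈ (convexHull ℝ (range f)).extremePoints ℝ := by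
    obtain ⟨i, hi⟩ : ∃ i, v ∈ Qgen i := by
      set_option maxRecDepth 100000 in revert v; decide
    simpa [isExtreme_singleton] using hface i {v} (singleton_subset_iff.2 hi) (singleton_nonempty v)
  have sign (i : Fin 55) (a b c d y z : Fin 18)
      (h : {a, b, c, d} ⊆ Qgen i ∧ Injective ![a, b, c, d] ∧ y ∉ Qgen i ∧ z ∉ Qgen i) :
      0 < bracket ![f a, f b, f c, f d] (f y) * bracket ![f a, f b, f c, f d] (f z) := by
    obtain ⟨hsub, habcd, hy, hz⟩ := h
    have hsub' : ({a, b, c, d} : Set (Fin 18)) ⊆ Qgen i := by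
      rw [← Finset.coe_subset] at hsub
      simpa using hsub
    exact zero_lt_bracket_mul_bracket hf hvert habcd (fun S hS ↦ hface i S (hS.trans hsub'))
      (fun h ↦ hy (hsub' h)) (fun h ↦ hz (hsub' h))
  exact false_of_bracket_signs (f E1) (f E2) (f E3) (f E4) (f D1) (f D2) (f D3)
    (sign 0 E1 E2 E3 E4 D1 D2 (by decide)) (sign 0 E1 E2 E3 E4 D1 D3 (by decide))
    (sign 8 E1 E3 D2 D3 E2 E4 (by decide)) (sign 6 E1 E4 D2 D3 E3 E2 (by decide))
    (sign 3 E1 E2 E4 D3 D2 D1 (by decide)) (sign 9 E1 E2 D1 D3 E4 E3 (by decide))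
    (sign 2 E1 E3 E4 D2 D3 D1 (by decide)) (sign 5 E3 E4 D1 D2 E1 E2 (by decide))
    (sign 10 E2 E3 D1 D2 E4 E1 (by decide))
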